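/- arXiv:1906.08027 — 2 statements merged into one kernel-verified Lean document; each statement's English description precedes it below -/
import Mathlib

section
/- Let A = (a₁,…,a_k), B = (b₁,…,b_k) be a PCP instance over Σ, and for each i let wᵢ = zip_ε(aᵢ, bᵢ) be the letter-wise shuffle of aᵢ and bᵢ padded with ε. Let L_Reg = { w_{i₁} w_{i₂} ⋯ w_{i_n} : n ≥ 1, i_j ∈ {1,…,k} } (a regular language, generated by the expression (w₁ | … | w_k)⁺). Then L_Reg ∩ Shuffled≡_{String^ε} ≠ ∅ if and only if the PCP instance has a solution. -/
def odds {Γ : Type} : List Γ → List Γ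
  | [] => []
  | [x] => [x]
  | x :: _ :: rest => x :: odds rest

def evens {Γ : Type} : List Γ → List Γ
  | [] => []
  | [_] => []
  | _ :: y :: rest => y :: evens rest

/-- Letter-wise shuffle of two strings, the shorter one padded at the end with `ε`
(modelled as `none`). -/
def zipPad {Γ : Type} : List Γ → List Γ → List (Option Γ)
  | [], [] => []
  | [], y :: ys => none :: some y :: zipPad [] ys
  | x :: xs, [] => some x :: none :: zipPad xs []
  | x :: xs, y :: ys => some x :: some y :: zipPad xs ys
  termination_by u v => u.length + v.length

/-- Shuffled String Equivalence Modulo Padding. -/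
def ShuffledEq (Γ : Type) : Set (List (Option Γ)) :=
  {w | w.length % 2 = 0 ∧ (odds w).reduceOption = (evens w).reduceOption}

/-- A PCP instance has a solution iff there is a nonempty index sequence with equal
concatenations. -/
def PCPSolvable {Γ : Type} (P : List (List Γ × List Γ)) : Prop :=
  ∃ is : List (Fin P.length), is ≠ [] ∧
    (is.map fun i => (P.get i).1).flatten = (is.map fun i => (P.get i).2).flatten

lemma zipPad_len_even {Γ : Type} (a b : List Γ) : (zipPad a b).length % 2 = 0 := by
  induction a, b using zipPad.induct <;> simp [zipPad, Nat.add_mod, *]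

lemma odds_append {Γ : Type} (u v : List Γ) (h : u.length % 2 = 0) :
    odds (u ++ v) = odds u ++ odds v := by
  induction u using odds.induct with
  | case1 => simp [odds]
  | case2 x => simp at h
  | case3 x y rest ih =>
    simp at h
    simp [odds, ih (by omega)]

lemma evens_append {Γ : Type} (u v : List Γ) (h : u.length % 2 = 0) :
    evens (u ++ v) = evens u ++ evens v := by
  induction u using evens.induct with
  | case1 => simp [evens]
  | case2 x => simp at h
  | case3 x y rest ih =>
    simp at h
    simp [evens, ih (by omega)]

lemma odds_zipPad {Γ : Type} (a b : List Γ) : (odds (zipPad a b)).reduceOption = a := by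
  induction a, b using zipPad.induct <;> simp_all [zipPad, odds, List.reduceOption] <;> assumption

lemma evens_zipPad {Γ : Type} (a b : List Γ) : (evens (zipPad a b)).reduceOption = b := by
  induction a, b using zipPad.induct <;> simp_all [zipPad, evens, List.reduceOption] <;> assumption

lemma flatten_props {Γ : Type} (P : List (List Γ × List Γ)) (is : List (Fin P.length)) :
    (is.map fun i => zipPad (P.get i).1 (P.get i).2).flatten.length % 2 = 0 ∧
    (odds (is.map fun i => zipPad (P.get i).1 (P.get i).2).flatten).reduceOption
      = (is.map fun i => (P.get i).1).flatten ∧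
    (evens (is.map fun i => zipPad (P.get i).1 (P.get i).2).flatten).reduceOption
      = (is.map fun i => (P.get i).2).flatten := by
  induction is with
  | nil => simp [odds, evens, List.reduceOption]
  | cons i t ih =>
    obtain ⟨h1, h2, h3⟩ := ih
    refine ⟨?_, ?_, ?_⟩
    · rw [List.map_cons, List.flatten_cons, List.length_append]
      have := zipPad_len_even (P.get i).1 (P.get i).2
      omega
    · simp only [List.map_cons, List.flatten_cons,
        odds_append _ _ (zipPad_len_even _ _), List.reduceOption_append,
        odds_zipPad, h2]
    · simp only [List.map_cons, List.flatten_cons,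
        evens_append _ _ (zipPad_len_even _ _), List.reduceOption_append,
        evens_zipPad, h3]


/-- For a PCP instance `P = ((a₁,b₁),…,(a_k,b_k))` with `wᵢ = zip_ε(aᵢ,bᵢ)`, the regular
language `L_Reg = { w_{i₁}⋯w_{iₙ} : n ≥ 1 }` intersects `Shuffled≡_{Stringᵉ}` iff the PCP
instance has a solution. -/
theorem stmt_12 {Γ : Type} (P : List (List Γ × List Γ)) :
    (∃ is : List (Fin P.length), is ≠ [] ∧
        (is.map fun i => zipPad (P.get i).1 (P.get i).2).flatten ∈ ShuffledEq Γ)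
    ↔ PCPSolvable P := by
  unfold PCPSolvable
  apply exists_congr
  intro is
  obtain ⟨h1, h2, h3⟩ := flatten_props P is
  rw [ShuffledEq]
  simp only [Set.mem_setOf_eq, h1, true_and, h2, h3]
end

section
/- Assuming the Post Correspondence Problem (over a binary alphabet) is undecidable, the regular intersection emptiness problem for Shuffled String Equivalence Modulo Padding over a binary alphabet is undecidable: there is no algorithm that, given a DFA A over Σ ∪ {ε} with |Σ| = 2, decides whether L(A) contains a word s₁t₁…sₙtₙ with h(s₁…sₙ) = h(t₁…tₙ). -/
/-- Index of a letter of the alphabet `{0, 1, ε}`. -/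
def letterIdx : Option (Fin 2) → ℕ
  | none => 2
  | some i => i

/-- A coded DFA over the alphabet `{0, 1, ε}`: number of states, transition table,
start state, list of accepting states.  `codedAccepts D w` holds iff running the table on
`w` from the start state ends in an accepting state. -/
def codedAccepts (D : ℕ × List (List ℕ) × ℕ × List ℕ) (w : List (Option (Fin 2))) : Prop :=
  (w.foldl (fun q c => (D.2.1.getD q []).getD (letterIdx c) 0) D.2.2.1) ∈ D.2.2.2

/-!
Reduction from PCP. Tile `i = (aᵢ, bᵢ)` becomes the block `(εε)^(i+1) zip_ε(aᵢ, bᵢ)`, whose odd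
and even letters erase to `aᵢ` and `bᵢ`; so a concatenation of blocks lies in the shuffled
equivalence language exactly when its index sequence solves the instance. The prefix `(εε)^(i+1)`
puts the first non-`ε` letter of block `i` at position `2i+2` or `2i+3`, so the blocks of nonempty
tiles form a prefix code, and the nonempty concatenations of blocks are accepted by the trie of
the blocks, a DFA whose table is computable from the instance. A tile with both words empty solves
the instance on its own; its block is all `ε`, and the shortest block that is a prefix of it is
then an accepted word of the language.
-/

theorem List.reduceOption_flatMap {ι α : Type*} (l : List ι) (g : ι → List (Option α)) :
    (l.flatMap g).reduceOption = l.flatMap fun i => (g i).reduceOption :=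
  List.filterMap_flatMap

section Interleave

variable {α : Type}

def interleave (ps : List (α × α)) : List α :=
  ps.flatMap fun p => [p.1, p.2]

@[simp]
theorem interleave_cons (p : α × α) (ps : List (α × α)) :
    interleave (p :: ps) = p.1 :: p.2 :: interleave ps := rfl

theorem interleave_append (ps qs : List (α × α)) :
    interleave (ps ++ qs) = interleave ps ++ interleave qs :=
  List.flatMap_append

theorem interleave_replicate (k : ℕ) (a : α) :
    interleave (List.replicate k (a, a)) = List.replicate (2 * k) a := by
  induction k with
  | zero => rfl
  | succ k ih => rw [List.replicate_succ, interleave_cons, ih, Nat.mul_succ]; rfl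

theorem interleave_flatMap {ι : Type} (l : List ι) (g : ι → List (α × α)) :
    (l.map fun i => interleave (g i)).flatten = interleave (l.flatMap g) := by
  rw [interleave, List.flatMap_assoc]
  rfl

theorem length_interleave (ps : List (α × α)) : (interleave ps).length = 2 * ps.length := by
  induction ps with
  | nil => rfl
  | cons p ps ih => simp only [interleave_cons, List.length_cons, ih]; omega

theorem odds_interleave (ps : List (α × α)) : odds (interleave ps) = ps.map Prod.fst := by
  induction ps with
  | nil => rfl
  | cons p ps ih => simp [odds, ih]

theorem evens_interleave (ps : List (α × α)) : evens (interleave ps) = ps.map Prod.snd := by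
  induction ps with
  | nil => rfl
  | cons p ps ih => simp [evens, ih]

theorem interleave_mem_shuffledEq_iff (ps : List (Option α × Option α)) :
    interleave ps ∈ ShuffledEq α ↔
      (ps.map Prod.fst).reduceOption = (ps.map Prod.snd).reduceOption := by
  simp [ShuffledEq, length_interleave, odds_interleave, evens_interleave]

theorem interleave_mem_shuffledEq_of_forall_eq_none {ps : List (Option α × Option α)}
    (h : ∀ x ∈ interleave ps, x = none) : interleave ps ∈ ShuffledEq α := by
  have hnil : ∀ g : Option α × Option α → Option α, (∀ p, g p ∈ [p.1, p.2]) →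
      (ps.map g).reduceOption = [] := fun g hg =>
    (List.reduceOption_eq_nil_iff _).2 ⟨_, List.eq_replicate_of_mem fun x hx => by
      obtain ⟨p, hp, rfl⟩ := List.mem_map.1 hx
      exact h _ (List.mem_flatMap.2 ⟨p, hp, hg p⟩)⟩
  rw [interleave_mem_shuffledEq_iff, hnil Prod.fst (by simp), hnil Prod.snd (by simp)]

end Interleave

section Trie

variable {α : Type*}

def IsPrefixMinimal (W : List (List α)) (u : List α) : Prop :=
  u ∈ W ∧ ∀ v ∈ W, v <+: u → v = u

theorem exists_isPrefixMinimal_prefix {W : List (List α)} {u : List α} (hu : u ∈ W) :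
    ∃ v, v <+: u ∧ IsPrefixMinimal W v := by
  classical
  have hex : ∃ k, u.take k ∈ W := ⟨u.length, by simpa using hu⟩
  refine ⟨u.take (Nat.find hex), List.take_prefix _ _, Nat.find_spec hex, fun v hv hvu => ?_⟩
  have hvu' : v <+: u := hvu.trans (List.take_prefix _ _)
  have hle : Nat.find hex ≤ v.length :=
    Nat.find_min' hex (by rwa [← List.prefix_iff_eq_take.1 hvu'])
  exact hvu.eq_of_length_le ((List.length_take_le _ _).trans hle)

variable [DecidableEq α]

/-- Reads a word block by block, the blocks being the words of `W`: the state `some p` means that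
`p` has been read since the last completed block, and `none` that a block was just completed. -/
def trieStep (W : List (List α)) (s : Option (List α)) (x : α) : Option (List α) :=
  if s.getD [] ++ [x] ∈ W then none else some (s.getD [] ++ [x])

theorem exists_flatten_of_foldl_trieStep_eq_none {W : List (List α)} {w : List α}
    {s : Option (List α)} (h : w.foldl (trieStep W) s = none) :
    ∃ us : List (List α), (∀ u ∈ us, u ∈ W) ∧ s.getD [] ++ w = us.flatten := by
  induction w generalizing s with
  | nil => exact ⟨[], by simp, by simp [show s = none from h]⟩
  | cons x w ih =>
    obtain ⟨us, hW, hw⟩ := ih h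
    by_cases hx : s.getD [] ++ [x] ∈ W
    · simp only [trieStep, hx, if_true, Option.getD_none, List.nil_append] at hw
      exact ⟨(s.getD [] ++ [x]) :: us, by simpa [hx] using hW, by simp [← hw]⟩
    · simp only [trieStep, hx, if_false, Option.getD_some] at hw
      exact ⟨us, hW, by simpa using hw⟩

theorem foldl_trieStep_none (W : List (List α)) {w : List α} (hw : w ≠ []) :
    w.foldl (trieStep W) none = w.foldl (trieStep W) (some []) := by
  obtain ⟨x, w, rfl⟩ := List.exists_cons_of_ne_nil hw
  rfl

theorem foldl_trieStep_some_eq_none {W : List (List α)} {p v : List α} (hv : v ≠ [])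
    (h : IsPrefixMinimal W (p ++ v)) : v.foldl (trieStep W) (some p) = none := by
  induction v generalizing p with
  | nil => exact absurd rfl hv
  | cons x v ih =>
    rcases v with _ | ⟨y, v⟩
    · simp [trieStep, h.1]
    · have hx : p ++ [x] ∉ W := fun hx => by
        simpa using congrArg List.length (h.2 _ hx (by simp))
      simp only [List.foldl_cons, trieStep, hx, if_false, Option.getD_some]
      exact ih (List.cons_ne_nil _ _) (by simpa using h)

theorem foldl_trieStep_flatten_eq_none {W : List (List α)} {us : List (List α)}
    (h : ∀ u ∈ us, IsPrefixMinimal W u) : us.flatten.foldl (trieStep W) none = none := by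
  induction us with
  | nil => rfl
  | cons u us ih =>
    rw [List.flatten_cons, List.foldl_append]
    have hu : u.foldl (trieStep W) none = none := by
      rcases eq_or_ne u [] with rfl | hu
      · rfl
      · rw [foldl_trieStep_none W hu]
        exact foldl_trieStep_some_eq_none hu (by simpa using h u (by simp))
    rw [hu]
    exact ih fun u hu => h u (by simp [hu])

end Trie

section Coding

/-- The letters `0, 1, ε` in the order of `letterIdx`. -/
def binaryLetters : List (Option (Fin 2)) := [some 0, some 1, none]

theorem getD_map_binaryLetters_letterIdx (f : Option (Fin 2) → ℕ) (c : Option (Fin 2)) :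
    (binaryLetters.map f).getD (letterIdx c) 0 = f c := by
  rcases c with _ | c
  · rfl
  · fin_cases c <;> rfl

variable {σ : Type*} [DecidableEq σ]

/-- Numbers each state by its position in `Q`; every state outside `Q` gets the number
`Q.length`, whose row is a sink. -/
def codeDFA (Q : List σ) (δ : σ → Option (Fin 2) → σ) (s f : σ) :
    ℕ × List (List ℕ) × ℕ × List ℕ :=
  (Q.length + 1,
    Q.map (fun q => binaryLetters.map fun x => Q.idxOf (δ q x)) ++
      [binaryLetters.map fun _ => Q.length],
    Q.idxOf s, [Q.idxOf f])

theorem getD_codeDFA_idxOf {Q : List σ} {δ : σ → Option (Fin 2) → σ}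
    (hδ : ∀ q x, q ∉ Q → δ q x ∉ Q) (s f q : σ) :
    (codeDFA Q δ s f).2.1.getD (Q.idxOf q) [] = binaryLetters.map fun x => Q.idxOf (δ q x) := by
  by_cases hq : q ∈ Q
  · have hlt : Q.idxOf q < Q.length := List.idxOf_lt_length_of_mem hq
    simp [codeDFA, List.getD_eq_getElem?_getD, List.getElem?_append_left, hlt,
      List.getElem_idxOf]
  · have hδq : ∀ x, Q.idxOf (δ q x) = Q.length := fun x => List.idxOf_eq_length (hδ q x hq)
    simp [codeDFA, List.getD_eq_getElem?_getD, List.idxOf_eq_length hq, hδq]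

theorem codedAccepts_codeDFA_iff {Q : List σ} {δ : σ → Option (Fin 2) → σ}
    (hδ : ∀ q x, q ∉ Q → δ q x ∉ Q) {s f : σ} (hf : f ∈ Q) (w : List (Option (Fin 2))) :
    codedAccepts (codeDFA Q δ s f) w ↔ w.foldl δ s = f := by
  have hrun : w.foldl (fun q c => ((codeDFA Q δ s f).2.1.getD q []).getD (letterIdx c) 0)
      (Q.idxOf s) = Q.idxOf (w.foldl δ s) :=
    List.foldl_hom (fun q => Q.idxOf q) fun q x => by
      rw [getD_codeDFA_idxOf hδ, getD_map_binaryLetters_letterIdx]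
  rw [codedAccepts, show (codeDFA Q δ s f).2.2.1 = Q.idxOf s from rfl, hrun,
    show (codeDFA Q δ s f).2.2.2 = [Q.idxOf f] from rfl, List.mem_singleton, eq_comm,
    List.idxOf_inj hf, eq_comm]

end Coding

section TrieDFA

variable {α : Type*}

def prefixes (W : List (List α)) : List (List α) :=
  W.flatMap fun w => (List.range (w.length + 1)).map (w.take ·)

theorem mem_prefixes {W : List (List α)} {p : List α} : p ∈ prefixes W ↔ ∃ w ∈ W, p <+: w := by
  simp only [prefixes, List.mem_flatMap, List.mem_map, List.mem_range, Nat.lt_succ_iff]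
  refine exists_congr fun w => and_congr_right fun _ => ⟨?_, fun hp => ?_⟩
  · rintro ⟨k, -, rfl⟩
    exact List.take_prefix k w
  · exact ⟨p.length, hp.length_le, (List.prefix_iff_eq_take.1 hp).symm⟩

def trieStates (W : List (List α)) : List (Option (List α)) :=
  none :: (prefixes W).map some

theorem trieStep_not_mem_trieStates [DecidableEq α] {W : List (List α)} {s : Option (List α)}
    (x : α) (hs : s ∉ trieStates W) : trieStep W s x ∉ trieStates W := by
  obtain ⟨p, rfl⟩ : ∃ p, s = some p :=
    Option.ne_none_iff_exists'.1 fun h => hs (h ▸ List.mem_cons_self)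
  have hp : ∀ w ∈ W, ¬ p <+: w := by simpa [trieStates, mem_prefixes] using hs
  have hpx : ∀ w ∈ W, ¬ p ++ [x] <+: w := fun w hw h =>
    hp w hw ((List.prefix_append p [x]).trans h)
  have hW : p ++ [x] ∉ W := fun h => hpx _ h (List.prefix_refl _)
  simpa [trieStep, hW, trieStates, mem_prefixes] using hpx

def trieDFA (W : List (List (Option (Fin 2)))) : ℕ × List (List ℕ) × ℕ × List ℕ :=
  codeDFA (trieStates W) (trieStep W) (some []) none

theorem codedAccepts_trieDFA_iff (W : List (List (Option (Fin 2)))) (w : List (Option (Fin 2))) :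
    codedAccepts (trieDFA W) w ↔ w.foldl (trieStep W) (some []) = none :=
  codedAccepts_codeDFA_iff (fun _ x => trieStep_not_mem_trieStates x) List.mem_cons_self w

end TrieDFA

section Blocks

variable {Γ : Type}

/-- The letter pairs of `(εε)^(i+1) zip_ε(a, b)`; past the end of a word, `t.1[j]?` is the padding
`ε`. -/
def tilePairs (i : ℕ) (t : List Γ × List Γ) : List (Option Γ × Option Γ) :=
  List.replicate (i + 1) (none, none) ++
    (List.range (max t.1.length t.2.length)).map fun j => (t.1[j]?, t.2[j]?)

def pcpBlock (i : ℕ) (t : List Γ × List Γ) : List (Option Γ) :=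
  interleave (tilePairs i t)

def pcpBlocks (P : List (List Γ × List Γ)) : List (List (Option Γ)) :=
  (List.range P.length).map fun i => pcpBlock i (P.getD i ([], []))

theorem mem_pcpBlocks {P : List (List Γ × List Γ)} {u : List (Option Γ)} :
    u ∈ pcpBlocks P ↔ u ∈ Set.range fun i : Fin P.length => pcpBlock i P[i] := by
  simp only [pcpBlocks, List.mem_map, List.mem_range, Set.mem_range]
  constructor
  · rintro ⟨i, hi, rfl⟩
    exact ⟨⟨i, hi⟩, by rw [List.getD_eq_getElem _ _ hi]; rfl⟩
  · rintro ⟨i, rfl⟩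
    exact ⟨i, i.isLt, by rw [List.getD_eq_getElem _ _ i.isLt]; rfl⟩

theorem pcpBlock_eq_replicate_append (i : ℕ) (t : List Γ × List Γ) : pcpBlock i t =
    List.replicate (2 * (i + 1)) none ++
      interleave ((List.range (max t.1.length t.2.length)).map fun j => (t.1[j]?, t.2[j]?)) := by
  rw [pcpBlock, tilePairs, interleave_append, interleave_replicate]

theorem nil_not_mem_pcpBlocks (P : List (List Γ × List Γ)) : [] ∉ pcpBlocks P := by
  intro h
  obtain ⟨i, hi⟩ := mem_pcpBlocks.1 h
  simpa [pcpBlock_eq_replicate_append] using congrArg List.length hi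

theorem reduceOption_map_getElem?_range (l : List Γ) {n : ℕ} (h : l.length ≤ n) :
    ((List.range n).map (l[·]?)).reduceOption = l := by
  induction l generalizing n with
  | nil => simp
  | cons x l ih =>
    obtain ⟨n, rfl⟩ : ∃ m, n = m + 1 := ⟨n - 1, by rw [List.length_cons] at h; omega⟩
    simp [List.range_succ_eq_map, List.map_map, Function.comp_def, ih (by simpa using h)]

theorem reduceOption_map_fst_tilePairs (i : ℕ) (t : List Γ × List Γ) :
    ((tilePairs i t).map Prod.fst).reduceOption = t.1 := by
  simp [tilePairs, List.reduceOption_append, Function.comp_def,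
    reduceOption_map_getElem?_range t.1 (le_max_left _ _)]

theorem reduceOption_map_snd_tilePairs (i : ℕ) (t : List Γ × List Γ) :
    ((tilePairs i t).map Prod.snd).reduceOption = t.2 := by
  simp [tilePairs, List.reduceOption_append, Function.comp_def,
    reduceOption_map_getElem?_range t.2 (le_max_right _ _)]

theorem flatten_pcpBlock_mem_shuffledEq_iff {ι : Type} (l : List ι) (f : ι → ℕ)
    (t : ι → List Γ × List Γ) :
    (l.map fun i => pcpBlock (f i) (t i)).flatten ∈ ShuffledEq Γ ↔
      (l.map fun i => (t i).1).flatten = (l.map fun i => (t i).2).flatten := by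
  simp only [pcpBlock, interleave_flatMap, interleave_mem_shuffledEq_iff, List.map_flatMap,
    List.reduceOption_flatMap, reduceOption_map_fst_tilePairs, reduceOption_map_snd_tilePairs]
  rfl

theorem findIdx_isSome_pcpBlock {i : ℕ} {t : List Γ × List Γ} (ht : t ≠ ([], [])) :
    (pcpBlock i t).findIdx Option.isSome < (pcpBlock i t).length ∧
      (pcpBlock i t).findIdx Option.isSome / 2 = i + 1 := by
  obtain ⟨n, hn⟩ : ∃ n, max t.1.length t.2.length = n + 1 :=
    Nat.exists_eq_add_one.2 (by rcases t with ⟨_ | _, _ | _⟩ <;> simp_all)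
  rw [pcpBlock_eq_replicate_append, hn, List.range_succ_eq_map]
  rcases t with ⟨_ | ⟨a, as⟩, bs⟩
  · obtain ⟨b, bs, rfl⟩ := List.exists_cons_of_ne_nil (by simpa using ht)
    simp [List.findIdx_append, List.findIdx_eq_length_of_false, List.findIdx_cons]
    omega
  · simp [List.findIdx_append, List.findIdx_eq_length_of_false, List.findIdx_cons]

theorem isPrefixMinimal_pcpBlock {P : List (List Γ × List Γ)} (hP : ([], []) ∉ P)
    (i : Fin P.length) : IsPrefixMinimal (pcpBlocks P) (pcpBlock i P[i]) := by
  refine ⟨mem_pcpBlocks.2 ⟨i, rfl⟩, fun v hv hvu => ?_⟩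
  obtain ⟨j, rfl⟩ := mem_pcpBlocks.1 hv
  have hne : ∀ k : Fin P.length, P[k] ≠ ([], []) := fun k h => hP (h ▸ List.getElem_mem _)
  have hi := findIdx_isSome_pcpBlock (i := i) (hne i)
  have hj := findIdx_isSome_pcpBlock (i := j) (hne j)
  dsimp only at hvu
  rw [hvu.findIdx_eq_of_findIdx_lt_length hj.1] at hi
  obtain rfl : j = i := Fin.ext (by omega)
  rfl

theorem exists_isPrefixMinimal_mem_shuffledEq {P : List (List Γ × List Γ)} (hP : ([], []) ∈ P) :
    ∃ v, IsPrefixMinimal (pcpBlocks P) v ∧ v ∈ ShuffledEq Γ := by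
  obtain ⟨i, hi, hPi⟩ := List.mem_iff_getElem.1 hP
  obtain ⟨v, hvu, hv⟩ := exists_isPrefixMinimal_prefix (mem_pcpBlocks.2 ⟨⟨i, hi⟩, rfl⟩)
  obtain ⟨j, rfl⟩ := mem_pcpBlocks.1 hv.1
  refine ⟨_, hv, interleave_mem_shuffledEq_of_forall_eq_none fun x hx => ?_⟩
  simpa [hPi, pcpBlock_eq_replicate_append, interleave] using hvu.subset hx

end Blocks

section Computability

variable {α β σ : Type*} [Primcodable α] [Primcodable β] [Primcodable σ]

theorem Primrec.list_replicate : Primrec₂ (@List.replicate α) :=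
  (Primrec.list_map (Primrec.list_range.comp Primrec.fst)
    (Primrec.snd.comp Primrec.fst).to₂).of_eq fun _ => by simp [List.map_const']

theorem Primrec.list_mem [DecidableEq α] : PrimrecRel fun (a : α) (l : List α) => a ∈ l :=
  (Primrec.nat_lt.comp Primrec.list_idxOf (Primrec.list_length.comp Primrec.snd)).of_eq
    fun _ => List.idxOf_lt_length_iff

theorem primrec_prefixes : Primrec (prefixes : List (List α) → List (List α)) :=
  Primrec.list_flatMap Primrec.id <| Primrec.to₂ <| Primrec.list_map
    (Primrec.list_range.comp (Primrec.succ.comp (Primrec.list_length.comp Primrec.snd)))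
    (Primrec.list_take.comp Primrec.snd (Primrec.snd.comp Primrec.fst)).to₂

theorem primrec_trieStates : Primrec (trieStates : List (List α) → List (Option (List α))) :=
  Primrec.list_cons.comp (Primrec.const none)
    (Primrec.list_map primrec_prefixes (Primrec.option_some.comp Primrec.snd).to₂)

theorem primrec_trieStep [DecidableEq α] :
    Primrec fun p : List (List α) × Option (List α) × α => trieStep p.1 p.2.1 p.2.2 := by
  have hnext : Primrec fun p : List (List α) × Option (List α) × α => p.2.1.getD [] ++ [p.2.2] :=
    Primrec.list_concat.comp (Primrec.option_getD.comp (Primrec.fst.comp Primrec.snd)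
      (Primrec.const [])) (Primrec.snd.comp Primrec.snd)
  exact Primrec.ite (Primrec.list_mem.comp hnext Primrec.fst) (Primrec.const none)
    (Primrec.option_some.comp hnext)

theorem primrec_codeDFA [DecidableEq σ] {Q : β → List σ} {δ : β → σ → Option (Fin 2) → σ}
    {s f : β → σ} (hQ : Primrec Q)
    (hδ : Primrec fun p : β × σ × Option (Fin 2) => δ p.1 p.2.1 p.2.2) (hs : Primrec s)
    (hf : Primrec f) : Primrec fun b => codeDFA (Q b) (δ b) (s b) (f b) := by
  have hrow : Primrec₂ fun b q => binaryLetters.map fun x => (Q b).idxOf (δ b q x) :=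
    Primrec.to₂ <| Primrec.list_map (Primrec.const _) <| Primrec.to₂ <|
      Primrec.list_idxOf.comp (hδ.comp ((Primrec.fst.comp Primrec.fst).pair
        ((Primrec.snd.comp Primrec.fst).pair Primrec.snd))) (hQ.comp (Primrec.fst.comp Primrec.fst))
  have hlen : Primrec fun b => (Q b).length := Primrec.list_length.comp hQ
  have hsink : Primrec fun b => binaryLetters.map fun _ => (Q b).length :=
    Primrec.list_map (Primrec.const _) (hlen.comp Primrec.fst).to₂
  exact (Primrec.succ.comp hlen).pair <|
    (Primrec.list_append.comp (Primrec.list_map hQ hrow)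
      (Primrec.list_cons.comp hsink (Primrec.const []))).pair <|
    (Primrec.list_idxOf.comp hs hQ).pair
      (Primrec.list_cons.comp (Primrec.list_idxOf.comp hf hQ) (Primrec.const []))

theorem primrec_trieDFA : Primrec trieDFA :=
  primrec_codeDFA primrec_trieStates primrec_trieStep (Primrec.const _) (Primrec.const _)

theorem primrec_interleave {Γ : Type} [Primcodable Γ] :
    Primrec (interleave : List (Γ × Γ) → List Γ) :=
  Primrec.list_flatMap Primrec.id <| Primrec.to₂ <| Primrec.list_cons.comp
    (Primrec.fst.comp Primrec.snd) <| Primrec.list_cons.comp (Primrec.snd.comp Primrec.snd)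
      (Primrec.const [])

theorem primrec_tilePairs {Γ : Type} [Primcodable Γ] :
    Primrec₂ (tilePairs : ℕ → List Γ × List Γ → List (Option Γ × Option Γ)) := by
  have hzip : Primrec₂ fun (t : List Γ × List Γ) (j : ℕ) => (t.1[j]?, t.2[j]?) :=
    (Primrec.list_getElem?.comp (Primrec.fst.comp Primrec.fst) Primrec.snd).pair
      (Primrec.list_getElem?.comp (Primrec.snd.comp Primrec.fst) Primrec.snd)
  exact Primrec.list_append.comp
    (Primrec.list_replicate.comp (Primrec.succ.comp Primrec.fst) (Primrec.const _))
    (Primrec.list_map (Primrec.list_range.comp (Primrec.nat_max.comp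
      (Primrec.list_length.comp (Primrec.fst.comp Primrec.snd))
      (Primrec.list_length.comp (Primrec.snd.comp Primrec.snd))))
      (hzip.comp (Primrec.snd.comp Primrec.fst) Primrec.snd))

theorem primrec_pcpBlocks {Γ : Type} [Primcodable Γ] :
    Primrec (pcpBlocks : List (List Γ × List Γ) → List (List (Option Γ))) :=
  Primrec.list_map (Primrec.list_range.comp Primrec.list_length) <| Primrec.to₂ <|
    primrec_interleave.comp <| primrec_tilePairs.comp Primrec.snd <|
      (Primrec.list_getD _).comp Primrec.fst Primrec.snd

end Computability

def pcpDFA (P : List (List (Fin 2) × List (Fin 2))) : ℕ × List (List ℕ) × ℕ × List ℕ :=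
  trieDFA (pcpBlocks P)

theorem pcpSolvable_iff_exists_codedAccepts (P : List (List (Fin 2) × List (Fin 2))) :
    PCPSolvable P ↔ ∃ w, codedAccepts (pcpDFA P) w ∧ w ∈ ShuffledEq (Fin 2) := by
  simp only [pcpDFA, codedAccepts_trieDFA_iff]
  constructor
  · rintro ⟨is, hne, heq⟩
    suffices ∃ us, us ≠ [] ∧ (∀ u ∈ us, IsPrefixMinimal (pcpBlocks P) u) ∧
        us.flatten ∈ ShuffledEq (Fin 2) by
      obtain ⟨us, hne, hmin, hw⟩ := this
      have hflat : us.flatten ≠ [] := fun h => by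
        obtain ⟨u, hu⟩ := List.exists_mem_of_ne_nil us hne
        exact nil_not_mem_pcpBlocks P (List.flatten_eq_nil_iff.1 h u hu ▸ (hmin u hu).1)
      exact ⟨_, by rw [← foldl_trieStep_none _ hflat, foldl_trieStep_flatten_eq_none hmin], hw⟩
    by_cases hP : ([], []) ∈ P
    · obtain ⟨v, hv, hvS⟩ := exists_isPrefixMinimal_mem_shuffledEq hP
      exact ⟨[v], List.cons_ne_nil _ _, by simpa using hv, by simpa using hvS⟩
    · refine ⟨is.map fun i : Fin P.length => pcpBlock i P[i], mt List.map_eq_nil_iff.1 hne,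
        by simpa using fun i _ => isPrefixMinimal_pcpBlock hP i, ?_⟩
      exact (flatten_pcpBlock_mem_shuffledEq_iff is _ fun i => P[i]).2 heq
  · rintro ⟨w, hacc, hw⟩
    obtain ⟨us, hus, hwus⟩ := exists_flatten_of_foldl_trieStep_eq_none hacc
    obtain ⟨is, rfl⟩ : us ∈ Set.range (List.map fun i : Fin P.length => pcpBlock i P[i]) := by
      rw [Set.range_list_map]
      exact fun u hu => mem_pcpBlocks.1 (hus u hu)
    simp only [Option.getD_some, List.nil_append] at hwus
    subst hwus
    refine ⟨is, ?_, (flatten_pcpBlock_mem_shuffledEq_iff is _ fun i => P[i]).1 hw⟩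
    rintro rfl
    simp at hacc

/-- Assuming PCP over a binary alphabet is undecidable, the regular intersection
emptiness problem of Shuffled String Equivalence Modulo Padding over a binary alphabet is
undecidable: there is no algorithm deciding, given a (coded) DFA `A` over `{0,1,ε}`,
whether `L(A)` contains a word `s₁t₁…sₙtₙ` with `h(s₁…sₙ) = h(t₁…tₙ)`. -/
theorem stmt_14
    (hPCP : ¬ ComputablePred fun P : List (List (Fin 2) × List (Fin 2)) => PCPSolvable P) :
    ¬ ComputablePred fun D : ℕ × List (List ℕ) × ℕ × List ℕ =>
      ∃ w : List (Option (Fin 2)), codedAccepts D w ∧ w ∈ ShuffledEq (Fin 2) := fun h =>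
  hPCP (ComputablePred.computable_of_manyOneReducible
    ⟨pcpDFA, (primrec_trieDFA.comp primrec_pcpBlocks).to_comp,
      pcpSolvable_iff_exists_codedAccepts⟩ h)
end
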